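/- arXiv:1806.00038 — 4 statements merged into one kernel-verified Lean document; each statement's English description precedes it below -/
import Mathlib

section
/- Let H be a Hilbert space and (x_λ)_{λ∈Λ} a net of contractions in B(H). Let M ⊆ H be a closed subspace invariant under each x_λ, such that the orthogonal complement M^⊥ is contained in ker(x_λ*) for every λ. If the net (x_λ P_M) converges to P_M in the weak operator topology, then (x_λ) converges to P_M in the weak operator topology, where P_M denotes the orthogonal projection onto M. -/
/-!
Write `P` for `P_M`. As `x_λ*` vanishes on `Mᗮ`, `⟪x_λ ξ, η⟫ = ⟪ξ, x_λ* (P η)⟫`. The vectors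
`w_λ = x_λ* (P η)` satisfy `‖w_λ‖ ≤ ‖P η‖` and `⟪P η, w_λ⟫ = ⟪x_λ (P η), P η⟫ → ‖P η‖²`, which
forces `w_λ → P η` in norm. Hence `⟪x_λ ξ, η⟫ → ⟪ξ, P η⟫ = ⟪P ξ, η⟫`.
-/

open Filter ContinuousLinearMap Topology InnerProductSpace

section

variable {𝕜 E : Type*} [RCLike 𝕜] [NormedAddCommGroup E] [InnerProductSpace 𝕜 E]

theorem tendsto_of_norm_le_of_tendsto_inner {ι : Type*} {l : Filter ι} {w : ι → E} {u : E}
    (hle : ∀ i, ‖w i‖ ≤ ‖u‖) (h : Tendsto (fun i => ⟪u, w i⟫_𝕜) l (𝓝 ⟪u, u⟫_𝕜)) :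
    Tendsto w l (𝓝 u) := by
  have hre : Tendsto (fun i => 2 * (‖u‖ ^ 2 - RCLike.re ⟪u, w i⟫_𝕜)) l (𝓝 0) := by
    have := ((RCLike.continuous_re.tendsto _).comp h).const_sub (‖u‖ ^ 2) |>.const_mul 2
    simpa [inner_self_eq_norm_sq] using this
  -- `‖w - u‖² = ‖u‖² - 2 re ⟪u, w⟫ + ‖w‖²` and `‖w‖ ≤ ‖u‖`
  have hsq : ∀ i, ‖w i - u‖ ^ 2 ≤ 2 * (‖u‖ ^ 2 - RCLike.re ⟪u, w i⟫_𝕜) := by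
    intro i
    have hw : ‖w i‖ ^ 2 ≤ ‖u‖ ^ 2 := pow_le_pow_left₀ (norm_nonneg _) (hle i) 2
    rw [norm_sub_rev, norm_sub_sq (𝕜 := 𝕜)]
    linarith
  rw [tendsto_iff_norm_sub_tendsto_zero]
  refine squeeze_zero (fun i => norm_nonneg _) (fun i => ?_)
    (by simpa using (Real.continuous_sqrt.tendsto 0).comp hre)
  rw [← Real.sqrt_sq (norm_nonneg (w i - u))]
  exact Real.sqrt_le_sqrt (hsq i)

theorem Submodule.map_starProjection_of_vanishes_on_orthogonal {F G : Type*} [AddCommGroup F]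
    [FunLike G E F] [AddMonoidHomClass G E F] {K : Submodule 𝕜 E} [K.HasOrthogonalProjection]
    {S : G} (hS : ∀ v ∈ Kᗮ, S v = 0) (y : E) : S (K.starProjection y) = S y := by
  have := hS _ (K.sub_starProjection_mem_orthogonal y)
  rwa [map_sub, sub_eq_zero, eq_comm] at this

end

theorem net_tendsto_projection_wot_general {H : Type*} [NormedAddCommGroup H] [InnerProductSpace ℂ H]
    [CompleteSpace H] {Λ : Type*} (l : Filter Λ)
    (x : Λ → H →L[ℂ] H) (hcontr : ∀ i, ‖x i‖ ≤ 1)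
    (M : Submodule ℂ H) [M.HasOrthogonalProjection]
    (hker : ∀ i, ∀ v ∈ Mᗮ, ContinuousLinearMap.adjoint (x i) v = 0)
    (hconv : ∀ ξ η : H,
      Tendsto (fun i => (inner ℂ (x i ((M.subtypeL ∘L M.orthogonalProjectionOnto) ξ)) η : ℂ)) l
        (nhds (inner ℂ ((M.subtypeL ∘L M.orthogonalProjectionOnto) ξ) η))) :
    ∀ ξ η : H,
      Tendsto (fun i => (inner ℂ (x i ξ) η : ℂ)) l
        (nhds (inner ℂ ((M.subtypeL ∘L M.orthogonalProjectionOnto) ξ) η)) := by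
  intro ξ η
  have hw : Tendsto (fun i => adjoint (x i) (M.starProjection η)) l (𝓝 (M.starProjection η)) := by
    refine tendsto_of_norm_le_of_tendsto_inner (𝕜 := ℂ) (fun i => ?_) ?_
    · refine ((adjoint (x i)).le_of_opNorm_le ?_ _).trans_eq (one_mul _)
      rw [LinearIsometryEquiv.norm_map]
      exact hcontr i
    · simpa [adjoint_inner_right] using hconv η (M.starProjection η)
  have hlim := (tendsto_const_nhds (x := ξ)).inner (𝕜 := ℂ) hw
  rw [← Submodule.inner_starProjection_left_eq_right] at hlim
  refine hlim.congr fun i => ?_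
  rw [Submodule.map_starProjection_of_vanishes_on_orthogonal (hker i), adjoint_inner_right]

/-- Let `(x i)` be a net of contractions on a Hilbert space `H`, `M` a closed subspace
invariant under each `x i` with `Mᗮ ⊆ ker (x i)*` for every `i`. If `x i ∘ P_M → P_M` in the
weak operator topology, then `x i → P_M` in the weak operator topology, where
`P_M = M.subtypeL ∘L orthogonalProjection M` is the orthogonal projection onto `M`. -/
theorem net_tendsto_projection_wot {H : Type*} [NormedAddCommGroup H] [InnerProductSpace ℂ H]
    [CompleteSpace H] {Λ : Type*} (l : Filter Λ) [l.NeBot]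
    (x : Λ → H →L[ℂ] H) (hcontr : ∀ i, ‖x i‖ ≤ 1)
    (M : Submodule ℂ H) (hM : IsClosed (M : Set H)) [M.HasOrthogonalProjection]
    (hinv : ∀ i, ∀ m ∈ M, x i m ∈ M)
    (hker : ∀ i, ∀ v ∈ Mᗮ, ContinuousLinearMap.adjoint (x i) v = 0)
    (hconv : ∀ ξ η : H,
      Tendsto (fun i => (inner ℂ (x i ((M.subtypeL ∘L M.orthogonalProjectionOnto) ξ)) η : ℂ)) l
        (nhds (inner ℂ ((M.subtypeL ∘L M.orthogonalProjectionOnto) ξ) η))) :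
    ∀ ξ η : H,
      Tendsto (fun i => (inner ℂ (x i ξ) η : ℂ)) l
        (nhds (inner ℂ ((M.subtypeL ∘L M.orthogonalProjectionOnto) ξ) η)) :=
  net_tendsto_projection_wot_general l x hcontr M hker hconv
end

section
/- Let x ∈ B(H) be a contraction and M ⊆ H a closed subspace with orthogonal projection P. If P x P = P and (I - P) x = 0, then x = P. -/
/-!
A contraction that fixes a vector has an adjoint fixing the same vector. Hence `x`, which is the
identity on `M` by `P x P = P` and `x = P x`, maps `Mᗮ` into `Mᗮ`; since `x = P x` it also maps
`Mᗮ` into `M`, so `x` vanishes on `Mᗮ` and agrees with `P` on `M ⊕ Mᗮ = H`.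
-/

open ContinuousLinearMap

open scoped InnerProductSpace

namespace ContinuousLinearMap

variable {𝕜 E : Type*} [RCLike 𝕜] [NormedAddCommGroup E] [InnerProductSpace 𝕜 E] [CompleteSpace E]

/-- Expanding `‖T† u - u‖²` with `⟪T† u, u⟫ = ⟪u, T u⟫ = ‖u‖²` leaves `‖T† u‖² - ‖u‖² ≤ 0`. -/
theorem adjoint_apply_eq_of_apply_eq {T : E →L[𝕜] E} (hT : ‖T‖ ≤ 1) {u : E} (hu : T u = u) :
    adjoint T u = u := by
  have hinner : ⟪adjoint T u, u⟫_𝕜 = ((‖u‖ ^ 2 : ℝ) : 𝕜) := by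
    rw [adjoint_inner_left, hu, inner_self_eq_norm_sq_to_K, RCLike.ofReal_pow]
  have hnorm : ‖adjoint T u‖ ≤ ‖u‖ :=
    calc ‖adjoint T u‖ ≤ ‖adjoint T‖ * ‖u‖ := le_opNorm _ _
      _ = ‖T‖ * ‖u‖ := by rw [LinearIsometryEquiv.norm_map]
      _ ≤ ‖u‖ := mul_le_of_le_one_left (norm_nonneg _) hT
  suffices ‖adjoint T u - u‖ ^ 2 ≤ 0 by simpa [sub_eq_zero] using this
  rw [norm_sub_sq (𝕜 := 𝕜), hinner, RCLike.ofReal_re]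
  nlinarith [norm_nonneg (adjoint T u)]

theorem mapsTo_orthogonal_of_forall_apply_eq {T : E →L[𝕜] E} (hT : ‖T‖ ≤ 1)
    {K : Submodule 𝕜 E} (hK : ∀ u ∈ K, T u = u) : Set.MapsTo T Kᗮ Kᗮ := fun w hw u hu => by
  rw [← adjoint_inner_left, adjoint_apply_eq_of_apply_eq hT (hK u hu)]
  exact hw u hu

end ContinuousLinearMap

/-- Let `x` be a contraction on a Hilbert space `H` and `M` a closed subspace with orthogonal
projection `P` (characterized by `P v = v` on `M` and `P v = 0` on `Mᗮ`).
If `P x P = P` and `(1 - P) x = 0`, then `x = P`. -/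
theorem contraction_eq_projection {H : Type*} [NormedAddCommGroup H] [InnerProductSpace ℂ H]
    [CompleteSpace H] (M : Submodule ℂ H) (hM : IsClosed (M : Set H))
    (P x : H →L[ℂ] H) (hx : ‖x‖ ≤ 1)
    (hP1 : ∀ v ∈ M, P v = v) (hP2 : ∀ v ∈ Mᗮ, P v = 0)
    (h1 : P ∘L x ∘L P = P) (h2 : (1 - P) ∘L x = 0) :
    x = P := by
  have : CompleteSpace M := hM.completeSpace_coe
  have hPx (v : H) : P (x v) = x v :=
    (sub_eq_zero.mp (by simpa using congr($h2 v))).symm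
  have hP_mem (v : H) : P v ∈ M := by
    obtain ⟨m, hm, m', hm', rfl⟩ := M.exists_add_mem_mem_orthogonal v
    simpa [hP1 m hm, hP2 m' hm'] using hm
  have hx_fix (u : H) (hu : u ∈ M) : x u = u := by
    simpa [hP1 u hu, hPx] using congr($h1 u)
  have hx_kill (w : H) (hw : w ∈ Mᗮ) : x w = 0 := by
    have : x w ∈ M ⊓ Mᗮ :=
      ⟨hPx w ▸ hP_mem (x w), mapsTo_orthogonal_of_forall_apply_eq hx hx_fix hw⟩
    simpa [M.inf_orthogonal_eq_bot] using this
  ext v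
  obtain ⟨m, hm, m', hm', rfl⟩ := M.exists_add_mem_mem_orthogonal v
  simp [hx_fix m hm, hx_kill m' hm', hP1 m hm, hP2 m' hm']
end

section
/- Let C_0, C_k be d×d complex matrices with C_k invertible. Then ‖[[C_0, (1/2)C_k], [0, C_0]]‖ < ‖[[C_0, C_k], [0, C_0]]‖, where ‖·‖ is the operator norm on 2d×2d matrices. -/
/-!
Split `[[C₀, C_k/2], [0, C₀]]` as the average of `[[C₀, C_k], [0, C₀]]` and `[[C₀, 0], [0, C₀]]`;
the latter has norm at most `‖C₀‖`. If `x` is a unit vector with `‖C₀ x‖ = ‖C₀‖` (finite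
dimension), then `[[C₀, C_k], [0, C₀]]` maps `(0, x)` to `(C_k x, C₀ x)`, whose squared norm
`‖C_k x‖² + ‖C₀‖²` exceeds `‖C₀‖²` because `C_k` is injective.
-/

open Matrix

theorem ContinuousLinearMap.exists_mem_sphere_norm_apply_eq_opNorm {𝕜 E F : Type*} [RCLike 𝕜]
    [NormedAddCommGroup E] [NormedSpace 𝕜 E] [FiniteDimensional 𝕜 E] [Nontrivial E]
    [NormedAddCommGroup F] [NormedSpace 𝕜 F] (f : E →L[𝕜] F) :
    ∃ x ∈ Metric.sphere (0 : E) 1, ‖f x‖ = ‖f‖ := by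
  have := FiniteDimensional.proper_rclike 𝕜 E
  have hK : IsCompact ((fun x => ‖f x‖) '' Metric.sphere (0 : E) 1) :=
    (isCompact_sphere 0 1).image (by fun_prop)
  have hne : (Metric.sphere (0 : E) 1).Nonempty :=
    Set.nonempty_coe_sort.mp (NormedSpace.sphere_nonempty_rclike 𝕜 zero_le_one)
  simpa [f.sSup_sphere_eq_norm] using hK.sSup_mem (hne.image _)

namespace Matrix

variable {𝕜 m n : Type*} [RCLike 𝕜] [Fintype m] [Fintype n]

theorem norm_sq_toLp_sumElim (u : m → 𝕜) (v : n → 𝕜) :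
    ‖(WithLp.toLp 2 (Sum.elim u v) : EuclideanSpace 𝕜 (m ⊕ n))‖ ^ 2 =
      ‖(WithLp.toLp 2 u : EuclideanSpace 𝕜 m)‖ ^ 2 +
        ‖(WithLp.toLp 2 v : EuclideanSpace 𝕜 n)‖ ^ 2 := by
  simp [EuclideanSpace.norm_sq_eq, Fintype.sum_sum_type]

variable [DecidableEq m] [DecidableEq n]

theorem toEuclideanCLM_fromBlocks_toLp (A : Matrix m m 𝕜) (B : Matrix m n 𝕜)
    (C : Matrix n m 𝕜) (D : Matrix n n 𝕜) (u : m → 𝕜) (v : n → 𝕜) :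
    toEuclideanCLM (𝕜 := 𝕜) (fromBlocks A B C D) (WithLp.toLp 2 (Sum.elim u v)) =
      WithLp.toLp 2 (Sum.elim (A *ᵥ u + B *ᵥ v) (C *ᵥ u + D *ᵥ v)) := by
  rw [toEuclideanCLM_toLp, fromBlocks_mulVec]
  simp

theorem norm_toEuclideanCLM_fromBlocks_zero_zero_le (A : Matrix m m 𝕜) (D : Matrix n n 𝕜) :
    ‖toEuclideanCLM (𝕜 := 𝕜) (fromBlocks A 0 0 D)‖ ≤
      max ‖toEuclideanCLM (𝕜 := 𝕜) A‖ ‖toEuclideanCLM (𝕜 := 𝕜) D‖ := by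
  set M := max ‖toEuclideanCLM (𝕜 := 𝕜) A‖ ‖toEuclideanCLM (𝕜 := 𝕜) D‖
  have hM : 0 ≤ M := le_max_of_le_left (norm_nonneg _)
  refine ContinuousLinearMap.opNorm_le_bound _ hM fun x => ?_
  obtain ⟨u, v, rfl⟩ : ∃ u v, x = WithLp.toLp 2 (Sum.elim u v) :=
    ⟨x.ofLp ∘ Sum.inl, x.ofLp ∘ Sum.inr, by simp⟩
  have hAu : ‖(WithLp.toLp 2 (A *ᵥ u) : EuclideanSpace 𝕜 m)‖ ≤ M * ‖WithLp.toLp 2 u‖ :=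
    ((toEuclideanCLM (𝕜 := 𝕜) A).le_opNorm _).trans (by gcongr; exact le_max_left _ _)
  have hDv : ‖(WithLp.toLp 2 (D *ᵥ v) : EuclideanSpace 𝕜 n)‖ ≤ M * ‖WithLp.toLp 2 v‖ :=
    ((toEuclideanCLM (𝕜 := 𝕜) D).le_opNorm _).trans (by gcongr; exact le_max_right _ _)
  rw [← pow_le_pow_iff_left₀ (norm_nonneg _) (by positivity) two_ne_zero, mul_pow,
    toEuclideanCLM_fromBlocks_toLp, norm_sq_toLp_sumElim, norm_sq_toLp_sumElim]
  simp only [zero_mulVec, add_zero, zero_add]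
  nlinarith [pow_le_pow_left₀ (norm_nonneg _) hAu 2, pow_le_pow_left₀ (norm_nonneg _) hDv 2]

theorem norm_toEuclideanCLM_lt_fromBlocks [Nonempty n] (A : Matrix m m 𝕜) (B : Matrix m n 𝕜)
    (C : Matrix n m 𝕜) (D : Matrix n n 𝕜) (hB : Function.Injective B.mulVec) :
    ‖toEuclideanCLM (𝕜 := 𝕜) D‖ < ‖toEuclideanCLM (𝕜 := 𝕜) (fromBlocks A B C D)‖ := by
  obtain ⟨x, hx, hDx⟩ := (toEuclideanCLM (𝕜 := 𝕜) D).exists_mem_sphere_norm_apply_eq_opNorm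
  rw [mem_sphere_zero_iff_norm] at hx
  set y : EuclideanSpace 𝕜 (m ⊕ n) := WithLp.toLp 2 (Sum.elim 0 x.ofLp)
  have hy : ‖y‖ = 1 := by
    rw [← sq_eq_sq₀ (norm_nonneg _) zero_le_one, one_pow, norm_sq_toLp_sumElim]
    simp [hx]
  have hBx : B *ᵥ x.ofLp ≠ 0 := fun h => by
    simpa [hx] using congrArg (‖WithLp.toLp 2 ·‖) (hB (h.trans (mulVec_zero B).symm))
  have hTy : ‖toEuclideanCLM (𝕜 := 𝕜) D‖ ^ 2 <
      ‖toEuclideanCLM (𝕜 := 𝕜) (fromBlocks A B C D) y‖ ^ 2 := by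
    rw [toEuclideanCLM_fromBlocks_toLp, norm_sq_toLp_sumElim, ← hDx]
    simp only [mulVec_zero, zero_add]
    exact lt_add_of_pos_left _ (pow_pos (norm_pos_iff.2 (by simpa using hBx)) 2)
  refine lt_of_pow_lt_pow_left₀ 2 (norm_nonneg _) (hTy.trans_le ?_)
  gcongr
  simpa [hy] using (toEuclideanCLM (𝕜 := 𝕜) (fromBlocks A B C D)).le_opNorm y

end Matrix

/-- If `C₀, C_k` are `d×d` complex matrices with `C_k` invertible (`d ≥ 1`), then
`‖[[C₀, C_k/2], [0, C₀]]‖ < ‖[[C₀, C_k], [0, C₀]]‖` in the operator norm on `2d×2d` matrices. -/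
theorem halved_block_norm_lt {d : ℕ} (hd : 0 < d) (C0 Ck : Matrix (Fin d) (Fin d) ℂ)
    (hCk : IsUnit Ck) :
    ‖Matrix.toEuclideanCLM (𝕜 := ℂ) (Matrix.fromBlocks C0 ((1 / 2 : ℂ) • Ck) 0 C0)‖ <
      ‖Matrix.toEuclideanCLM (𝕜 := ℂ) (Matrix.fromBlocks C0 Ck 0 C0)‖ := by
  have : Nonempty (Fin d) := ⟨⟨0, hd⟩⟩
  set T := toEuclideanCLM (𝕜 := ℂ) (n := Fin d ⊕ Fin d)
  have hsplit : fromBlocks C0 ((1 / 2 : ℂ) • Ck) 0 C0 =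
      (1 / 2 : ℂ) • fromBlocks C0 Ck 0 C0 + (1 / 2 : ℂ) • fromBlocks C0 0 0 C0 := by
    rw [fromBlocks_smul, fromBlocks_smul, fromBlocks_add, ← add_smul]
    norm_num
  have hdiag : ‖T (fromBlocks C0 0 0 C0)‖ ≤ ‖toEuclideanCLM (𝕜 := ℂ) C0‖ :=
    (norm_toEuclideanCLM_fromBlocks_zero_zero_le C0 C0).trans_eq (max_self _)
  have hlt := norm_toEuclideanCLM_lt_fromBlocks C0 Ck 0 C0 (mulVec_injective_iff_isUnit.mpr hCk)
  calc ‖T (fromBlocks C0 ((1 / 2 : ℂ) • Ck) 0 C0)‖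
      ≤ ‖(1 / 2 : ℂ) • T (fromBlocks C0 Ck 0 C0)‖ +
          ‖(1 / 2 : ℂ) • T (fromBlocks C0 0 0 C0)‖ := by
        rw [hsplit, map_add, map_smul, map_smul]
        exact norm_add_le _ _
    _ = (‖T (fromBlocks C0 Ck 0 C0)‖ + ‖T (fromBlocks C0 0 0 C0)‖) / 2 := by
        simp only [norm_smul]; norm_num; ring
    _ < ‖T (fromBlocks C0 Ck 0 C0)‖ := by linarith
end

section
/- Let H be an infinite-dimensional separable Hilbert space and let A ⊆ B(H ⊕ H ⊕ H) be the algebra of all strictly upper-triangular 3×3 operator matrices [[0, r, s], [0, 0, t], [0, 0, 0]] with r, s, t ∈ B(H). Suppose θ : A → B(F) is a contractive (in particular bounded) algebra homomorphism with F a Hilbert space, and suppose θ is nonzero on the matrix with s = I and r = t = 0. Then F is infinite-dimensional. -/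
/-! Split a countable Hilbert basis of `H` into infinitely many infinite rows. Each row yields an
isometry `Vₙ` of `H`, and distinct rows are orthogonal, so `Vₙ* V_k = δₙₖ`. In the algebra the
(1,2)-corner of `Vₙ*` times the (2,3)-corner of `V_k` is `δₙₖ` times the (1,3)-corner of `1`;
applying `θ`, whose value on the latter is nonzero, shows that the images `θ(Vₙ*, 0, 0)` are
linearly independent in `B(F)`. -/

open ContinuousLinearMap

/-- The `i`-th coordinate projection of the Hilbert space direct sum `H ⊕ H ⊕ H`. -/
noncomputable def proj3 {H : Type*} [NormedAddCommGroup H] [InnerProductSpace ℂ H]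
    (i : Fin 3) : (PiLp 2 fun _ : Fin 3 => H) →L[ℂ] H :=
  (ContinuousLinearMap.proj i) ∘L
    (PiLp.continuousLinearEquiv 2 ℂ (fun _ : Fin 3 => H)).toContinuousLinearMap

/-- The strictly upper-triangular `3×3` operator matrix `[[0, r, s], [0, 0, t], [0, 0, 0]]`
acting on the Hilbert space direct sum `H ⊕ H ⊕ H`. -/
noncomputable def upperTri3 {H : Type*} [NormedAddCommGroup H] [InnerProductSpace ℂ H]
    (r s t : H →L[ℂ] H) :
    (PiLp 2 fun _ : Fin 3 => H) →L[ℂ] (PiLp 2 fun _ : Fin 3 => H) :=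
  (PiLp.continuousLinearEquiv 2 ℂ (fun _ : Fin 3 => H)).symm.toContinuousLinearMap ∘L
    (ContinuousLinearMap.pi ![r ∘L proj3 1 + s ∘L proj3 2, t ∘L proj3 2, 0])

open scoped InnerProductSpace

theorem linearIndependent_of_mul_eq_ite {K A ι : Type*} [Field K] [Ring A] [Algebra K A]
    [DecidableEq ι] {a b : ι → A} {c : A} (hc : c ≠ 0)
    (hab : ∀ n k, a n * b k = if n = k then c else 0) :
    LinearIndependent K a := by
  rw [linearIndependent_iff']
  intro s g hsum i hi
  simpa [Finset.sum_mul, smul_mul_assoc, hab, hi, hc] using congrArg (· * b i) hsum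

section InnerProductSpace

variable {𝕜 E E' ι κ : Type*} [RCLike 𝕜]
  [NormedAddCommGroup E] [InnerProductSpace 𝕜 E]
  [NormedAddCommGroup E'] [InnerProductSpace 𝕜 E']

theorem Orthonormal.countable [TopologicalSpace.SeparableSpace E] {v : ι → E}
    (hv : Orthonormal 𝕜 v) : Countable ι := by
  have hdist : Pairwise fun i j => 1 < dist (v i) (v j) := by
    intro i j hij
    have hsq : dist (v i) (v j) ^ 2 = 2 := by
      rw [dist_eq_norm, @norm_sub_sq 𝕜, hv.2 hij, hv.1 i, hv.1 j]
      norm_num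
    nlinarith [dist_nonneg (x := v i) (y := v j)]
  refine Pairwise.countable_of_isOpen_disjoint (s := fun i => Metric.ball (v i) (1 / 2))
    (fun i j hij => Metric.ball_disjoint_ball ?_) (fun _ => Metric.isOpen_ball)
    (fun _ => Metric.nonempty_ball.2 one_half_pos)
  linarith [hdist hij]

theorem HilbertBasis.finiteDimensional [Finite ι] (b : HilbertBasis ι 𝕜 E) :
    FiniteDimensional 𝕜 E := by
  have := Fintype.ofFinite ι
  exact Module.Finite.of_basis b.toOrthonormalBasis.toBasis

theorem inner_eq_zero_of_hasSum_smul {u : ι → E} {w : κ → E} (huw : ∀ i j, ⟪u i, w j⟫_𝕜 = 0)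
    {c : ι → 𝕜} {d : κ → 𝕜} {x y : E} (hx : HasSum (fun i => c i • u i) x)
    (hy : HasSum (fun j => d j • w j) y) : ⟪x, y⟫_𝕜 = 0 := by
  have hxw : ∀ j, ⟪w j, x⟫_𝕜 = 0 := fun j =>
    (hx.mapL (innerSL 𝕜 (w j))).unique <| by simp [inner_eq_zero_symm.1 (huw _ j)]
  exact (hy.mapL (innerSL 𝕜 x)).unique <| by simp [inner_eq_zero_symm.1 (hxw _)]

theorem OrthogonalFamily.adjoint_comp_eq_ite [CompleteSpace E] [CompleteSpace E'] [DecidableEq κ]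
    {V : κ → E →ₗᵢ[𝕜] E'} (hV : OrthogonalFamily 𝕜 (fun _ => E) V) (n k : κ) :
    adjoint (V n).toContinuousLinearMap ∘L (V k).toContinuousLinearMap =
      if n = k then 1 else 0 := by
  split_ifs with h
  · subst h
    exact (V n).adjoint_comp_self
  · ext x
    refine ext_inner_left 𝕜 fun y => ?_
    rw [comp_apply, adjoint_inner_right]
    simpa using hV h y x

namespace HilbertBasis

variable [CompleteSpace E']

/-- The isometry sending the Hilbert basis vector `b i` to `u i`. -/
noncomputable def linearIsometryOfOrthonormal (b : HilbertBasis ι 𝕜 E) {u : ι → E'}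
    (hu : Orthonormal 𝕜 u) : E →ₗᵢ[𝕜] E' :=
  hu.orthogonalFamily.linearIsometry.comp b.repr.toLinearIsometry

theorem hasSum_linearIsometryOfOrthonormal (b : HilbertBasis ι 𝕜 E) {u : ι → E'}
    (hu : Orthonormal 𝕜 u) (x : E) :
    HasSum (fun i => b.repr x i • u i) (b.linearIsometryOfOrthonormal hu x) := by
  simpa [linearIsometryOfOrthonormal] using hu.orthogonalFamily.hasSum_linearIsometry (b.repr x)

theorem orthogonalFamily_linearIsometryOfOrthonormal (b : HilbertBasis ι 𝕜 E)
    {v : κ × ι → E'} (hv : Orthonormal 𝕜 v) :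
    OrthogonalFamily 𝕜 (fun _ : κ => E) fun n =>
      b.linearIsometryOfOrthonormal (hv.comp _ (Prod.mk_right_injective n)) := by
  intro n k hnk x y
  refine inner_eq_zero_of_hasSum_smul (fun i j => hv.2 ?_)
    (b.hasSum_linearIsometryOfOrthonormal _ x) (b.hasSum_linearIsometryOfOrthonormal _ y)
  simp [hnk]

end HilbertBasis

variable [CompleteSpace E] [TopologicalSpace.SeparableSpace E]

theorem exists_isometries_adjoint_mul_eq_ite (hinf : ¬ FiniteDimensional 𝕜 E) :
    ∃ V : ℕ → E →L[𝕜] E, ∀ n k, adjoint (V n) * V k = if n = k then 1 else 0 := by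
  obtain ⟨w, b, -⟩ := exists_hilbertBasis 𝕜 E
  have : Countable w := b.orthonormal.countable
  have : Infinite w := not_finite_iff_infinite.1 fun _ => hinf b.finiteDimensional
  obtain ⟨e⟩ := nonempty_equiv_of_countable (α := ℕ) (β := w)
  have hinj : Function.Injective fun p : ℕ × w => e (Nat.pair p.1 (e.symm p.2)) := by
    rintro ⟨n, i⟩ ⟨k, j⟩ h
    simpa [Nat.pair_eq_pair] using h
  have hV := b.orthogonalFamily_linearIsometryOfOrthonormal (b.orthonormal.comp _ hinj)
  exact ⟨fun n => _, hV.adjoint_comp_eq_ite⟩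

end InnerProductSpace

theorem upper_triangular_rep_infinite_dimensional_general {H F : Type*}
    [NormedAddCommGroup H] [InnerProductSpace ℂ H] [CompleteSpace H]
    [TopologicalSpace.SeparableSpace H] (hinf : ¬ FiniteDimensional ℂ H)
    [NormedAddCommGroup F] [InnerProductSpace ℂ F]
    (θ : ((H →L[ℂ] H) × (H →L[ℂ] H) × (H →L[ℂ] H)) →ₗ[ℂ] (F →L[ℂ] F))
    (hmul : ∀ r s t r' s' t' : H →L[ℂ] H,
      θ (r, s, t) * θ (r', s', t') = θ (0, r * t', 0))
    (hnz : θ (0, 1, 0) ≠ 0) :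
    ¬ FiniteDimensional ℂ F := by
  intro hF
  obtain ⟨V, hV⟩ := exists_isometries_adjoint_mul_eq_ite hinf
  have hθV : ∀ n k, θ (adjoint (V n), 0, 0) * θ (0, 0, V k) =
      if n = k then θ (0, 1, 0) else 0 := by
    intro n k
    rw [hmul, hV]
    split_ifs
    · rfl
    · exact θ.map_zero
  exact Module.Finite.not_linearIndependent_of_infinite _
    (linearIndependent_of_mul_eq_ite (K := ℂ) hnz hθV)

/-- Let `H` be an infinite-dimensional separable Hilbert space and let `A` be the algebra of
strictly upper-triangular `3×3` operator matrices `[[0, r, s], [0, 0, t], [0, 0, 0]]` with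
`r, s, t ∈ B(H)`, acting on `H ⊕ H ⊕ H`. If `θ : A → B(F)` (presented as a linear map in the
entries `(r, s, t)`) is a contractive multiplicative homomorphism which is nonzero on the
matrix with `s = I`, `r = t = 0`, then `F` is infinite-dimensional. -/
theorem upper_triangular_rep_infinite_dimensional {H F : Type*}
    [NormedAddCommGroup H] [InnerProductSpace ℂ H] [CompleteSpace H]
    [TopologicalSpace.SeparableSpace H] (hinf : ¬ FiniteDimensional ℂ H)
    [NormedAddCommGroup F] [InnerProductSpace ℂ F] [CompleteSpace F]
    (θ : ((H →L[ℂ] H) × (H →L[ℂ] H) × (H →L[ℂ] H)) →ₗ[ℂ] (F →L[ℂ] F))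
    (hmul : ∀ r s t r' s' t' : H →L[ℂ] H,
      θ (r, s, t) * θ (r', s', t') = θ (0, r * t', 0))
    (hcontr : ∀ r s t : H →L[ℂ] H, ‖θ (r, s, t)‖ ≤ ‖upperTri3 r s t‖)
    (hnz : θ (0, 1, 0) ≠ 0) :
    ¬ FiniteDimensional ℂ F :=
  upper_triangular_rep_infinite_dimensional_general hinf θ hmul hnz
end
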